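/- Let n ≥ 3 and let S_n be the shell graph on n vertices with apex c. The visibility polynomial of S_n is V(S_n)(x) = (1+x)^{n-1} + x + (n-1)x^2 + (2n-5)x^3. -/

import Mathlib

open SimpleGraph Polynomial

/-- Two vertices `u` and `v` are `X`-visible in `G` if some shortest `u`–`v` path
has no internal vertex in `X`, i.e. its support meets `X` only possibly in `{u, v}`. -/
def XVisible {V : Type*} (G : SimpleGraph V) (X : Set V) (u v : V) : Prop :=
  ∃ p : G.Walk u v, p.IsPath ∧ p.length = G.dist u v ∧
    ∀ w ∈ p.support, w ∈ X → w = u ∨ w = v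

/-- `X` is a mutual-visibility set of `G` if every pair of vertices of `X` is `X`-visible. -/
def MutualVisibilitySet {V : Type*} (G : SimpleGraph V) (X : Set V) : Prop :=
  ∀ u ∈ X, ∀ v ∈ X, XVisible G X u v

open Classical in
/-- The visibility polynomial: `∑ m_k x^k` where `m_k` is the number of
mutual-visibility sets of cardinality `k`. -/
noncomputable def visPoly {V : Type*} [Fintype V] (G : SimpleGraph V) : Polynomial ℕ :=
  ∑ S ∈ Finset.univ.powerset.filter (fun S : Finset V => MutualVisibilitySet G ↑S),
    Polynomial.X ^ S.card

/-- The wheel graph with rim `cycleGraph m` (on `some`-vertices) and hub `none`. -/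
def wheelGraph (m : ℕ) : SimpleGraph (Option (Fin m)) :=
  SimpleGraph.fromRel (fun u v =>
    (u = none ∧ v ≠ none) ∨
    ∃ i j : Fin m, u = some i ∧ v = some j ∧ (SimpleGraph.cycleGraph m).Adj i j)

/-- The shell graph with path `pathGraph m` (on `some`-vertices) and apex `none`. -/
def shellGraph (m : ℕ) : SimpleGraph (Option (Fin m)) :=
  SimpleGraph.fromRel (fun u v =>
    (u = none ∧ v ≠ none) ∨
    ∃ i j : Fin m, u = some i ∧ v = some j ∧ (SimpleGraph.pathGraph m).Adj i j)

/-- The bow graph: apex `none` joined to two disjoint paths of `a` and `b` vertices. -/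
def bowGraph (a b : ℕ) : SimpleGraph (Option (Fin a ⊕ Fin b)) :=
  SimpleGraph.fromRel (fun u v =>
    (u = none ∧ v ≠ none) ∨
    (∃ i j : Fin a, u = some (Sum.inl i) ∧ v = some (Sum.inl j) ∧ (SimpleGraph.pathGraph a).Adj i j) ∨
    (∃ i j : Fin b, u = some (Sum.inr i) ∧ v = some (Sum.inr j) ∧ (SimpleGraph.pathGraph b).Adj i j))

/-- The friendship graph: center `none`; the `i`-th triangle has the two
noncentral vertices `some (i, 0)` and `some (i, 1)`. -/
def friendshipGraph (n : ℕ) : SimpleGraph (Option (Fin n × Fin 2)) :=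
  SimpleGraph.fromRel (fun u v =>
    (u = none ∧ v ≠ none) ∨
    ∃ (i : Fin n) (x y : Fin 2), u = some (i, x) ∧ v = some (i, y) ∧ x ≠ y)

/-- The helm graph: a copy of the wheel (the `Sum.inl`-vertices) together with a
pendant vertex `Sum.inr k` attached to each rim vertex `Sum.inl (some k)`. -/
def helmGraph (m : ℕ) : SimpleGraph (Option (Fin m) ⊕ Fin m) :=
  SimpleGraph.fromRel (fun u v =>
    (∃ x y : Option (Fin m), u = Sum.inl x ∧ v = Sum.inl y ∧ (wheelGraph m).Adj x y) ∨
    (∃ k : Fin m, u = Sum.inl (some k) ∧ v = Sum.inr k))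

/-- `W` is a `c_Q`-visible set: `W ⊆ V \ Q`, every pair of vertices of `W` is
`Q`-visible, and `{u, w}` is `Q`-visible for all `u ∈ Q`, `w ∈ W`. -/
def CQVisible {V : Type*} (G : SimpleGraph V) (Q W : Set V) : Prop :=
  W ⊆ Qᶜ ∧ (∀ u ∈ W, ∀ v ∈ W, XVisible G Q u v) ∧ (∀ u ∈ Q, ∀ w ∈ W, XVisible G Q u w)

/-- An absolute `c_Q`-visible set: a `c_Q`-visible set for which `Q` is moreover a
mutual-visibility set of `G`. -/
def AbsoluteCQVisible {V : Type*} (G : SimpleGraph V) (Q W : Set V) : Prop :=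
  CQVisible G Q W ∧ MutualVisibilitySet G Q


/-!
The apex is adjacent to every other vertex, so two distinct non-adjacent vertices are at
distance two, and `X` is a mutual-visibility set iff any two non-adjacent vertices of `X` have
a common neighbour outside `X`. Sets avoiding the apex can use the apex itself, so all `2^(n-1)`
of them qualify. For a set containing the apex, the common neighbour must be the rim vertex
between two rim vertices at distance two on the path; this leaves as rim parts exactly `∅`,
the `n - 1` singletons, and the `(n - 2) + (n - 3)` pairs `{v_i, v_j}` with `|i - j| ∈ {1, 2}`.
-/

open Finset

def HasCommonNeighborsOutside {V : Type*} (G : SimpleGraph V) (X : Set V) : Prop :=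
  ∀ u ∈ X, ∀ v ∈ X, u ≠ v → ¬G.Adj u v → ∃ w ∉ X, G.Adj u w ∧ G.Adj w v

section Visibility

variable {V : Type*} {G : SimpleGraph V} {X : Set V} {u v : V}

theorem xVisible_refl (G : SimpleGraph V) (X : Set V) (u : V) : XVisible G X u u :=
  ⟨.nil, .nil, by simp, by simp +contextual⟩

theorem xVisible_of_adj (h : G.Adj u v) : XVisible G X u v :=
  ⟨h.toWalk, by simp [h.ne], by simp [dist_eq_one_iff_adj.mpr h], by simp +contextual⟩

theorem xVisible_iff_of_dist_eq_two (h : G.dist u v = 2) :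
    XVisible G X u v ↔ ∃ w ∉ X, G.Adj u w ∧ G.Adj w v := by
  constructor
  · rintro ⟨p, -, hp, hX⟩
    rw [h] at hp
    match p, hp with
    | .cons (v := w) huw (.cons hwv .nil), _ =>
      exact ⟨w, fun hw => (hX w (by simp) hw).elim huw.ne' hwv.ne, huw, hwv⟩
  · rintro ⟨w, hw, huw, hwv⟩
    have hne : u ≠ v := by rintro rfl; simp at h
    refine ⟨.cons huw (.cons hwv .nil), by simp [huw.ne, hwv.ne, hne], by simp [h], ?_⟩
    simp only [Walk.support_cons, Walk.support_nil, List.mem_cons, List.not_mem_nil]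
    rintro x (rfl | rfl | rfl | h) hx
    exacts [.inl rfl, absurd hx hw, .inr rfl, h.elim]

theorem mutualVisibilitySet_iff_hasCommonNeighborsOutside {c : V}
    (hc : ∀ v, v ≠ c → G.Adj c v) :
    MutualVisibilitySet G X ↔ HasCommonNeighborsOutside G X := by
  have hdist {u v : V} (hne : u ≠ v) (huv : ¬G.Adj u v) : G.dist u v = 2 := by
    have hu : u ≠ c := by rintro rfl; exact huv (hc v hne.symm)
    have hv : v ≠ c := by rintro rfl; exact huv (hc u hne).symm
    have : G.edist u v = 2 :=
      edist_eq_two_iff.mpr ⟨hne, huv, c, (hc u hu).symm, (hc v hv).symm⟩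
    simp [SimpleGraph.dist, this]
  refine forall₂_congr fun u _ => forall₂_congr fun v _ => ?_
  by_cases hne : u = v
  · simp [hne, xVisible_refl]
  by_cases huv : G.Adj u v
  · simp [huv, xVisible_of_adj]
  · simp [hne, huv, xVisible_iff_of_dist_eq_two (hdist hne huv)]

end Visibility

theorem hasCommonNeighborsOutside_pathGraph_iff {m : ℕ} {T : Finset (Fin m)} :
    HasCommonNeighborsOutside (pathGraph m) ↑T ↔
      T = ∅ ∨ ∃ a b : Fin m, a ≤ b ∧ (b : ℕ) ≤ a + 2 ∧ T = {a, b} := by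
  simp only [HasCommonNeighborsOutside, mem_coe, pathGraph_adj]
  constructor
  · intro h
    rcases T.eq_empty_or_nonempty with hT | hT
    · exact .inl hT
    set a := T.min' hT
    set b := T.max' hT
    have hab : (b : ℕ) ≤ a + 2 ∧ ∀ c ∈ T, c = a ∨ c = b := by
      have hbounds (c) (hc : c ∈ T) : a ≤ c ∧ c ≤ b := ⟨T.min'_le c hc, T.le_max' c hc⟩
      simp only [Fin.le_def, Fin.ext_iff] at hbounds ⊢
      by_cases hgap : (a : ℕ) + 2 ≤ b
      · obtain ⟨k, hk, hak, hkb⟩ := h a (T.min'_mem hT) b (T.max'_mem hT)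
          (by rw [← Fin.val_ne_iff]; omega) (by omega)
        refine ⟨by omega, fun c hc => ?_⟩
        have hck : (c : ℕ) ≠ k := Fin.val_ne_of_ne (by rintro rfl; exact hk hc)
        have := hbounds c hc
        omega
      · exact ⟨by omega, fun c hc => by have := hbounds c hc; omega⟩
    refine .inr ⟨a, b, T.min'_le b (T.max'_mem hT), hab.1, ?_⟩
    ext c
    rw [mem_insert, mem_singleton]
    refine ⟨hab.2 c, ?_⟩
    rintro (rfl | rfl)
    exacts [T.min'_mem hT, T.max'_mem hT]
  · rintro (rfl | ⟨a, b, hab, hba, rfl⟩)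
    · simp
    simp only [mem_insert, mem_singleton]
    rintro i hi j hj hij hnadj
    rw [Fin.le_def] at hab
    rw [← Fin.val_ne_iff] at hij
    refine ⟨⟨(i + j) / 2, by omega⟩, ?_⟩
    simp only [Fin.ext_iff]
    rcases hi with rfl | rfl <;> rcases hj with rfl | rfl <;> omega

section ShellGraph

variable {m : ℕ}

theorem shellGraph_adj_some_some {i j : Fin m} :
    (shellGraph m).Adj (some i) (some j) ↔ (pathGraph m).Adj i j := by
  simp only [shellGraph, fromRel_adj]
  grind [SimpleGraph.Adj.ne, SimpleGraph.adj_comm]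

theorem shellGraph_adj_none : ∀ v, v ≠ none → (shellGraph m).Adj none v
  | some i, _ => by simp [shellGraph]

theorem mutualVisibilitySet_shellGraph_map_some (T : Finset (Fin m)) :
    MutualVisibilitySet (shellGraph m) ↑(T.map .some) := by
  rw [mutualVisibilitySet_iff_hasCommonNeighborsOutside shellGraph_adj_none]
  intro u hu v hv _ _
  exact ⟨none, by simp, (shellGraph_adj_none u (by rintro rfl; simp at hu)).symm,
    shellGraph_adj_none v (by rintro rfl; simp at hv)⟩

theorem mutualVisibilitySet_shellGraph_insertNone_iff {T : Finset (Fin m)} :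
    MutualVisibilitySet (shellGraph m) ↑(insertNone T) ↔
      HasCommonNeighborsOutside (pathGraph m) ↑T := by
  have hsome (i : Fin m) : (shellGraph m).Adj (some i) none :=
    (shellGraph_adj_none _ (Option.some_ne_none i)).symm
  rw [mutualVisibilitySet_iff_hasCommonNeighborsOutside shellGraph_adj_none]
  simp [HasCommonNeighborsOutside, Option.forall, Option.exists, shellGraph_adj_none,
    shellGraph_adj_some_some, hsome]

end ShellGraph

theorem Finset.pair_eq_pair_of_le {α : Type*} [LinearOrder α] {a b c d : α} (hab : a ≤ b)
    (hcd : c ≤ d) (h : ({a, b} : Finset α) = {c, d}) : a = c ∧ b = d := by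
  have ha : a ∈ ({c, d} : Finset α) := h ▸ mem_insert_self a {b}
  have hb : b ∈ ({c, d} : Finset α) := h ▸ by simp
  have hc : c ∈ ({a, b} : Finset α) := h ▸ mem_insert_self c {d}
  have hd : d ∈ ({a, b} : Finset α) := h ▸ by simp
  simp only [mem_insert, mem_singleton] at ha hb hc hd
  grind

theorem Fin.card_filter_val_add_eq (m d : ℕ) :
    #{p : Fin m × Fin m | (p.1 : ℕ) + d = p.2} = m - d := by
  rw [← Fintype.card_fin (m - d), ← card_univ]
  refine card_bij (fun p hp => ⟨p.1, by simp at hp; omega⟩) (by simp) ?_ ?_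
  · simp only [mem_filter, mem_univ, true_and, Fin.mk.injEq]
    intro p hp q hq h
    ext <;> omega
  · intro i _
    exact ⟨(⟨i, by omega⟩, ⟨i + d, by omega⟩), by simp⟩

/-- A nonempty such `T` is `{a, b}` with `b - a = 0, 1` or `2`, and there are `m - d` such pairs
with `b - a = d`. -/
theorem sum_filter_eq_empty_or_eq_pair {M : Type*} [AddCommMonoid M] (m : ℕ) (f : ℕ → M) :
    ∑ T : Finset (Fin m) with T = ∅ ∨ ∃ a b : Fin m, a ≤ b ∧ (b : ℕ) ≤ a + 2 ∧ T = {a, b},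
        f #T = f 0 + m • f 1 + (m - 1 + (m - 2)) • f 2 := by
  let D (d : ℕ) : Finset (Fin m × Fin m) := {p | (p.1 : ℕ) + d = p.2}
  have hfamily : ({T : Finset (Fin m) | T = ∅ ∨ ∃ a b : Fin m, a ≤ b ∧ (b : ℕ) ≤ a + 2 ∧
      T = {a, b}} : Finset _) = insert ∅ ((D 0 ∪ D 1 ∪ D 2).image fun p => {p.1, p.2}) := by
    ext T
    simp only [D, mem_filter, mem_univ, true_and, mem_insert, mem_image, mem_union, Prod.exists,
      Fin.le_def]
    grind
  have hinj : Set.InjOn (fun p : Fin m × Fin m => ({p.1, p.2} : Finset (Fin m)))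
      ↑(D 0 ∪ D 1 ∪ D 2) := by
    intro p hp q hq h
    simp [D] at hp hq
    have := pair_eq_pair_of_le (Fin.le_def.mpr (by omega)) (Fin.le_def.mpr (by omega)) h
    exact Prod.ext this.1 this.2
  have hdisj (d e : ℕ) (hde : d ≠ e) : Disjoint (D d) (D e) :=
    disjoint_filter.mpr fun p _ hd he => hde (by omega)
  have hsum (d k : ℕ) (hk : ∀ p ∈ D d, #{p.1, p.2} = k) :
      ∑ p ∈ D d, f #{p.1, p.2} = (m - d) • f k := by
    rw [sum_congr rfl fun p hp => congrArg f (hk p hp), sum_const, Fin.card_filter_val_add_eq]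
  have hcard_one : ∀ p ∈ D 0, #{p.1, p.2} = 1 := by
    intro p hp
    simp only [D, mem_filter, mem_univ, true_and, add_zero] at hp
    rw [Fin.ext hp, pair_eq_singleton, card_singleton]
  have hcard_two (d : ℕ) (hd : d ≠ 0) : ∀ p ∈ D d, #{p.1, p.2} = 2 := by
    intro p hp
    simp only [D, mem_filter, mem_univ, true_and] at hp
    exact card_pair (Fin.ne_of_val_ne (by omega))
  rw [hfamily, sum_insert (by simp), sum_image hinj,
    sum_union (disjoint_union_left.mpr ⟨hdisj 0 2 (by simp), hdisj 1 2 (by simp)⟩),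
    sum_union (hdisj 0 1 (by simp)), hsum 0 1 hcard_one, hsum 1 2 (hcard_two 1 one_ne_zero),
    hsum 2 2 (hcard_two 2 two_ne_zero), card_empty, add_smul, Nat.sub_zero]
  abel

theorem Fintype.sum_finset_option {α M : Type*} [Fintype α] [AddCommMonoid M]
    (f : Finset (Option α) → M) :
    ∑ S, f S = ∑ T : Finset α, f (T.map .some) + ∑ T : Finset α, f (insertNone T) := by
  classical
  rw [← sum_filter_not_add_sum_filter univ (none ∈ ·)]
  congr 1
  · refine sum_nbij' eraseNone (·.map Function.Embedding.some) (by simp) (by simp) ?_ (by simp)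
      ?_ <;> intro S hS <;> simp only [mem_filter, mem_univ, true_and] at hS <;>
      simp [erase_eq_of_notMem hS]
  · refine sum_nbij' eraseNone insertNone (by simp) (by simp) ?_ (by simp) ?_ <;>
      intro S hS <;> simp only [mem_filter, mem_univ, true_and] at hS <;>
      simp [insert_eq_of_mem hS]

theorem visPoly_shellGraph (m : ℕ) :
    visPoly (shellGraph m) = (1 + X) ^ m + X + C m * X ^ 2 + C (2 * m - 3) * X ^ 3 := by
  classical
  have hrim : ∑ T : Finset (Fin m), (X : ℕ[X]) ^ #T = (1 + X) ^ m := by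
    simpa [add_comm] using Fin.sum_pow_mul_eq_add_pow (n := m) (X : ℕ[X]) 1
  have happex := sum_filter_eq_empty_or_eq_pair m fun k => (X : ℕ[X]) ^ (k + 1)
  rw [visPoly, powerset_univ, sum_filter, Fintype.sum_finset_option]
  simp only [mutualVisibilitySet_shellGraph_map_some, mutualVisibilitySet_shellGraph_insertNone_iff,
    hasCommonNeighborsOutside_pathGraph_iff, card_map, card_insertNone, if_true, hrim]
  rw [← sum_filter, happex, show m - 1 + (m - 2) = 2 * m - 3 by omega]
  simp only [zero_add, pow_one, Nat.reduceAdd, nsmul_eq_mul, ← C_eq_natCast, Nat.cast_id]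
  abel

theorem visPoly_shell_general (n : ℕ) :
    visPoly (shellGraph (n - 1)) =
      (1 + Polynomial.X) ^ (n - 1) + Polynomial.X +
        Polynomial.C (n - 1) * Polynomial.X ^ 2 +
        Polynomial.C (2 * n - 5) * Polynomial.X ^ 3 := by
  rw [visPoly_shellGraph, show 2 * (n - 1) - 3 = 2 * n - 5 by omega]

theorem visPoly_shell (n : ℕ) (hn : 3 ≤ n) :
    visPoly (shellGraph (n - 1)) =
      (1 + Polynomial.X) ^ (n - 1) + Polynomial.X +
        Polynomial.C (n - 1) * Polynomial.X ^ 2 +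
        Polynomial.C (2 * n - 5) * Polynomial.X ^ 3 :=
  visPoly_shell_general n
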